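/- Let (e; t, h : G → R) be a cat¹-group. Let S = ker t, let R act on S by s^r = e(r)⁻¹ s e(r) (which is a well-defined action by automorphisms since ker t is normal in G), and let ∂ : S → R be the restriction of h to S. Then (∂ : S → R) with this action is a crossed module, i.e. it satisfies CM1 and CM2. -/
import Mathlib


universe u

/-- A crossed module `(μ : M → P)`: groups `M`, `P`, a (right) action of `P` on `M` by
group automorphisms, written `act m p` for `m ^ p`, and a homomorphism `μ : M →* P`
satisfying CM1: `μ (m ^ p) = p⁻¹ * μ m * p` and CM2: `n ^ (μ m) = m⁻¹ * n * m`. -/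
structure CrossedModule (M P : Type u) [Group M] [Group P] where
  μ : M →* P
  act : M → P → M
  act_mul : ∀ m n p, act (m * n) p = act m p * act n p
  act_one : ∀ m, act m 1 = m
  act_act : ∀ m p q, act (act m p) q = act m (p * q)
  cm1 : ∀ m p, μ (act m p) = p⁻¹ * μ m * p
  cm2 : ∀ m n, act n (μ m) = m⁻¹ * n * m

/-- Let `(e; t, h : G → R)` be a cat¹-group (CAT1: `t ∘ e = h ∘ e = id`;
CAT2: `[ker t, ker h] = 1`).  Let `S = ker t`, let `R` act on `S` by
`s ^ r = e(r)⁻¹ * s * e(r)`, and let `∂ : S → R` be the restriction of `h`.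
Then `(∂ : S → R)` with this action is a crossed module (satisfies CM1 and CM2). -/
theorem cat1_gives_crossedModule {G R : Type u} [Group G] [Group R]
    (e : R →* G) (t h : G →* R)
    (hte : ∀ r, t (e r) = r) (hhe : ∀ r, h (e r) = r)
    (hcomm : ∀ a b : G, a ∈ t.ker → b ∈ h.ker → a * b = b * a) :
    ∃ X : CrossedModule t.ker R,
      (∀ s : t.ker, X.μ s = h (s : G)) ∧
      ∀ (s : t.ker) (r : R), (X.act s r : G) = (e r)⁻¹ * (s : G) * e r := by
  have mem : ∀ (s : t.ker) (r : R), (e r)⁻¹ * (s : G) * e r ∈ t.ker := by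
    intro s r
    have hs : t (s : G) = 1 := s.2
    simp [MonoidHom.mem_ker, hs, hte]
  refine ⟨{ μ := h.comp t.ker.subtype
            act := fun s r => ⟨(e r)⁻¹ * (s : G) * e r, mem s r⟩
            act_mul := ?_
            act_one := ?_
            act_act := ?_
            cm1 := ?_
            cm2 := ?_ }, fun s => rfl, fun s r => rfl⟩
  · intro m n p; ext; simp [mul_assoc]
  · intro m; ext; simp
  · intro m p q; ext; simp [mul_assoc]
  · intro m p
    simp [MonoidHom.comp_apply, hhe, mul_assoc]
  · intro m n
    ext
    -- goal: (e (h m))⁻¹ * n * e (h m) = m⁻¹ * n * m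
    have hb : (e (h (m : G)))⁻¹ * (m : G) ∈ h.ker := by
      simp [MonoidHom.mem_ker, hhe]
    have ha : (m : G)⁻¹ * (n : G) * (m : G) ∈ t.ker := by
      have hm : t (m : G) = 1 := m.2
      have hn : t (n : G) = 1 := n.2
      simp [MonoidHom.mem_ker, hm, hn]
    have key := hcomm _ _ ha hb
    -- (m⁻¹ n m) * (e(hm)⁻¹ m) = (e(hm)⁻¹ m) * (m⁻¹ n m)
    show (e (h (m : G)))⁻¹ * (n : G) * e (h (m : G)) = (m : G)⁻¹ * (n : G) * (m : G)
    calc (e (h (m : G)))⁻¹ * (n : G) * e (h (m : G))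
        = ((e (h (m : G)))⁻¹ * (m : G)) * ((m : G)⁻¹ * (n : G) * (m : G)) *
            ((e (h (m : G)))⁻¹ * (m : G))⁻¹ := by group
      _ = ((m : G)⁻¹ * (n : G) * (m : G)) * ((e (h (m : G)))⁻¹ * (m : G)) *
            ((e (h (m : G)))⁻¹ * (m : G))⁻¹ := by rw [← key]
      _ = (m : G)⁻¹ * (n : G) * (m : G) := by group
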